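/- arXiv:1412.4330 — 2 statements merged into one kernel-verified Lean document; each statement's English description precedes it below -/
import Mathlib

section
/- Let I be a set, r : I → ℝ an injective map, Z the swapping ring of (I, r), and {·,·} a swapping bracket on Z. Then {·,·} satisfies the Jacobi identity: {{P,Q},R} + {{Q,R},P} + {{R,P},Q} = 0 for all P, Q, R ∈ Z. -/
/-!
The Jacobiator of an antisymmetric biderivation is a derivation in each argument and is invariant
under cyclic permutation, so it vanishes identically once it vanishes on triples of generators
`x_ab, x_cd, x_ef`. There it equals `C₁ x_ad x_cf x_eb + C₂ x_cb x_af x_ed`, where `C₁` and `C₂`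
are sums of products of linking numbers. These only depend on the relative order of
`r a, …, r f`, so they can be computed on six points of `Fin 6`, and a finite check shows that
either both coefficients vanish, or both monomials contain a diagonal generator `x_aa = 0`, or
the two monomials coincide and `C₁ + C₂ = 0`.
-/

noncomputable section

/-- The linking number `J(r,x,s,y)` of two pairs of points on the (cut) circle. -/
def linkJ (r x s y : ℝ) : ℝ :=
  (1 / 2) * (Real.sign (r - x) * Real.sign (r - y) * Real.sign (y - x)
    - Real.sign (r - x) * Real.sign (r - s) * Real.sign (s - x))

/-- The ideal of `ℝ[x_{ab} : (a,b) ∈ I × I]` generated by the variables `x_{aa}`. -/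
def swapIdeal (I : Type*) : Ideal (MvPolynomial (I × I) ℝ) :=
  Ideal.span {P : MvPolynomial (I × I) ℝ | ∃ a : I, P = MvPolynomial.X (a, a)}

/-- The swapping ring of `(I, r)`: the quotient of the polynomial ring
`ℝ[x_{ab} : (a,b) ∈ I × I]` by the ideal generated by the `x_{aa}`. -/
abbrev SwapRing (I : Type*) : Type _ := MvPolynomial (I × I) ℝ ⧸ swapIdeal I

/-- The generator `x_{ab}` of the swapping ring. -/
def swapGen {I : Type*} (a b : I) : SwapRing I :=
  Ideal.Quotient.mk (swapIdeal I) (MvPolynomial.X (a, b))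

open Finset

section LinkSign

variable {α : Type*} [LinearOrder α]

def orderSign (x y : α) : ℤ := if x < y then -1 else if y < x then 1 else 0

def linkSign (p q s t : α) : ℤ :=
  orderSign p q * orderSign p t * orderSign t q - orderSign p q * orderSign p s * orderSign s q

lemma Real.sign_sub_eq_orderSign (x y : ℝ) : Real.sign (x - y) = orderSign x y := by
  unfold orderSign
  split_ifs with h h'
  · simp [Real.sign_of_neg (sub_neg.mpr h)]
  · simp [Real.sign_of_pos (sub_pos.mpr h')]
  · simp [le_antisymm (not_lt.mp h') (not_lt.mp h)]

lemma linkJ_eq_linkSign (p q s t : ℝ) : linkJ p q s t = linkSign p q s t / 2 := by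
  simp only [linkJ, linkSign, Real.sign_sub_eq_orderSign]
  push_cast
  ring

def orderRank {n : ℕ} (v : Fin n → α) (i : Fin n) : Fin n :=
  ⟨#{j | v j < v i}, (card_lt_univ_of_notMem (x := i) (by simp)).trans_eq (card_fin n)⟩

lemma orderRank_lt_orderRank_iff {n : ℕ} {v : Fin n → α} {i j : Fin n} :
    orderRank v i < orderRank v j ↔ v i < v j := by
  rw [orderRank, orderRank, Fin.mk_lt_mk]
  refine ⟨fun h => ?_, fun h => card_lt_card ⟨fun k => ?_, fun hsub => ?_⟩⟩
  · by_contra! hji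
    refine h.not_ge (card_le_card fun k => ?_)
    simpa using fun hk => hk.trans_le hji
  · simpa using fun hk => hk.trans h
  · simpa using hsub (by simpa using h : i ∈ ({k | v k < v j} : Finset _))

lemma orderRank_eq_orderRank_iff {n : ℕ} {v : Fin n → α} {i j : Fin n} :
    orderRank v i = orderRank v j ↔ v i = v j := by
  simp only [le_antisymm_iff, ← not_lt, orderRank_lt_orderRank_iff]

lemma orderSign_orderRank {n : ℕ} (v : Fin n → α) (i j : Fin n) :
    orderSign (orderRank v i) (orderRank v j) = orderSign (v i) (v j) := by
  simp only [orderSign, orderRank_lt_orderRank_iff]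

lemma linkSign_orderRank {n : ℕ} (v : Fin n → α) (i j k l : Fin n) :
    linkSign (orderRank v i) (orderRank v j) (orderRank v k) (orderRank v l) =
      linkSign (v i) (v j) (v k) (v l) := by
  simp only [linkSign, orderSign_orderRank]

def jacobiCoeff₁ (a b c d e f : α) : ℤ :=
  linkSign a b c d * linkSign c b e f + linkSign c d e f * linkSign e d a b +
    linkSign e f a b * linkSign a f c d

def jacobiCoeff₂ (a b c d e f : α) : ℤ :=
  linkSign a b c d * linkSign a d e f + linkSign c d e f * linkSign c f a b +
    linkSign e f a b * linkSign e b c d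

def JacobiCancels (a b c d e f : α) : Prop :=
  (jacobiCoeff₁ a b c d e f = 0 ∧ jacobiCoeff₂ a b c d e f = 0) ∨
    ((a = d ∨ c = f ∨ e = b) ∧ (c = b ∨ a = f ∨ e = d)) ∨
    (jacobiCoeff₁ a b c d e f + jacobiCoeff₂ a b c d e f = 0 ∧
      ((a = c ∧ b = d) ∨ (c = e ∧ d = f) ∨ (e = a ∧ f = b) ∨ (a = c ∧ c = e) ∨
        (b = d ∧ d = f)))

lemma jacobiCancels_fin_six : ∀ a b c d e f : Fin 6, JacobiCancels a b c d e f := by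
  unfold JacobiCancels
  decide +kernel

lemma jacobiCancels (a b c d e f : α) : JacobiCancels a b c d e f := by
  let v : Fin 6 → α := ![a, b, c, d, e, f]
  have h := jacobiCancels_fin_six (orderRank v 0) (orderRank v 1) (orderRank v 2) (orderRank v 3)
    (orderRank v 4) (orderRank v 5)
  simp only [JacobiCancels, jacobiCoeff₁, jacobiCoeff₂, linkSign_orderRank,
    orderRank_eq_orderRank_iff] at h
  exact h

end LinkSign

def jacobiator {A : Type*} [Add A] (br : A → A → A) (x y z : A) : A :=
  br (br x y) z + br (br y z) x + br (br z x) y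

lemma jacobiator_cycle {A : Type*} [AddCommMonoid A] (br : A → A → A) (x y z : A) :
    jacobiator br x y z = jacobiator br y z x := by
  unfold jacobiator
  abel

structure IsAlmostPoissonBracket (R : Type*) {A : Type*} [CommSemiring R] [CommRing A]
    [Algebra R A] (br : A → A → A) : Prop where
  add_left : ∀ x y z : A, br (x + y) z = br x z + br y z
  smul_left : ∀ (c : R) (x y : A), br (c • x) y = c • br x y
  antisymm : ∀ x y : A, br x y = - br y x
  leibniz_left : ∀ x y z : A, br (x * y) z = x * br y z + y * br x z

namespace IsAlmostPoissonBracket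

variable {R A : Type*} [CommSemiring R] [CommRing A] [Algebra R A] {br : A → A → A}
  (hbr : IsAlmostPoissonBracket R br)
include hbr

lemma add_right (x y z : A) : br z (x + y) = br z x + br z y := by
  rw [hbr.antisymm z, hbr.add_left, hbr.antisymm x, hbr.antisymm y, neg_add, neg_neg, neg_neg]

lemma mul_right (x y z : A) : br z (x * y) = x * br z y + y * br z x := by
  rw [hbr.antisymm z, hbr.leibniz_left, hbr.antisymm y, hbr.antisymm x]
  ring

lemma algebraMap_left (c : R) (x : A) : br (algebraMap R A c) x = 0 := by
  have one_left : br 1 x = 0 := by simpa using hbr.leibniz_left 1 1 x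
  rw [Algebra.algebraMap_eq_smul_one, hbr.smul_left, one_left, smul_zero]

lemma jacobiator_add_left (x x' y z : A) :
    jacobiator br (x + x') y z = jacobiator br x y z + jacobiator br x' y z := by
  simp only [jacobiator, hbr.add_left, hbr.add_right]
  abel

lemma jacobiator_mul_left (x x' y z : A) :
    jacobiator br (x * x') y z = x * jacobiator br x' y z + x' * jacobiator br x y z := by
  simp only [jacobiator, hbr.leibniz_left, hbr.add_left, hbr.mul_right]
  linear_combination br x y * hbr.antisymm z x' + br x' y * hbr.antisymm z x

lemma jacobiator_algebraMap_left (c : R) (y z : A) :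
    jacobiator br (algebraMap R A c) y z = 0 := by
  have zero_left (x : A) : br 0 x = 0 := by simpa using hbr.add_left 0 0 x
  simp only [jacobiator, hbr.antisymm _ (algebraMap R A c), hbr.algebraMap_left, zero_left,
    neg_zero, add_zero]

lemma jacobiator_eq_zero_of_left {s : Set A} (hs : Algebra.adjoin R s = ⊤) {y z : A}
    (h : ∀ x ∈ s, jacobiator br x y z = 0) (x : A) : jacobiator br x y z = 0 := by
  have hx : x ∈ Algebra.adjoin R s := hs ▸ Algebra.mem_top
  induction hx using Algebra.adjoin_induction with
  | mem x hx => exact h x hx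
  | algebraMap c => exact hbr.jacobiator_algebraMap_left c y z
  | add x x' _ _ hx hx' => rw [hbr.jacobiator_add_left, hx, hx', add_zero]
  | mul x x' _ _ hx hx' => rw [hbr.jacobiator_mul_left, hx, hx', mul_zero, mul_zero, add_zero]

lemma jacobiator_eq_zero {s : Set A} (hs : Algebra.adjoin R s = ⊤)
    (h : ∀ x ∈ s, ∀ y ∈ s, ∀ z ∈ s, jacobiator br x y z = 0) (x y z : A) :
    jacobiator br x y z = 0 := by
  have h₁ (x : A) (y z : s) : jacobiator br x y z = 0 :=
    hbr.jacobiator_eq_zero_of_left hs (fun x hx => h x hx y y.2 z z.2) x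
  have h₂ (x y : A) (z : s) : jacobiator br x y z = 0 :=
    hbr.jacobiator_eq_zero_of_left hs
      (fun x hx => by rw [jacobiator_cycle]; exact h₁ y z ⟨x, hx⟩) x
  exact hbr.jacobiator_eq_zero_of_left hs
    (fun x hx => by rw [jacobiator_cycle]; exact h₂ y z ⟨x, hx⟩) x

end IsAlmostPoissonBracket

section SwappingRing

variable {I : Type*}

lemma swapGen_self (a : I) : swapGen a a = 0 :=
  Ideal.Quotient.eq_zero_iff_mem.mpr (Ideal.subset_span ⟨a, rfl⟩)

lemma adjoin_range_swapGen :
    Algebra.adjoin ℝ (Set.range fun p : I × I => swapGen p.1 p.2) = ⊤ := by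
  have h : (Set.range fun p : I × I => swapGen p.1 p.2) =
      Ideal.Quotient.mkₐ ℝ (swapIdeal I) '' Set.range MvPolynomial.X := by
    rw [← Set.range_comp]
    rfl
  rw [h, Algebra.adjoin_image, MvPolynomial.adjoin_range_X, Algebra.map_top,
    AlgHom.range_eq_top]
  exact Ideal.Quotient.mkₐ_surjective ℝ _

variable (r : I → ℝ) {br : SwapRing I → SwapRing I → SwapRing I}
  (hbr : IsAlmostPoissonBracket ℝ br)
  (h_gen : ∀ a b c d : I,
    br (swapGen a b) (swapGen c d) = linkJ (r a) (r b) (r c) (r d) • (swapGen a d * swapGen c b))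
include hbr h_gen

lemma bracket_bracket_swapGen (a b c d e f : I) :
    br (br (swapGen a b) (swapGen c d)) (swapGen e f) =
      (linkJ (r a) (r b) (r c) (r d) * linkJ (r c) (r b) (r e) (r f)) •
          (swapGen a d * swapGen c f * swapGen e b) +
        (linkJ (r a) (r b) (r c) (r d) * linkJ (r a) (r d) (r e) (r f)) •
          (swapGen c b * swapGen a f * swapGen e d) := by
  rw [h_gen, hbr.smul_left, hbr.leibniz_left, h_gen, h_gen, mul_smul_comm, mul_smul_comm,
    smul_add, smul_smul, smul_smul, ← mul_assoc, ← mul_assoc]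

lemma jacobiator_swapGen (a b c d e f : I) :
    jacobiator br (swapGen a b) (swapGen c d) (swapGen e f) =
      ((jacobiCoeff₁ (r a) (r b) (r c) (r d) (r e) (r f) : ℝ) / 4) •
          (swapGen a d * swapGen c f * swapGen e b) +
        ((jacobiCoeff₂ (r a) (r b) (r c) (r d) (r e) (r f) : ℝ) / 4) •
          (swapGen c b * swapGen a f * swapGen e d) := by
  simp only [jacobiator, bracket_bracket_swapGen r hbr h_gen, linkJ_eq_linkSign, jacobiCoeff₁,
    jacobiCoeff₂, Int.cast_add, Int.cast_mul]
  -- both monomials are invariant under the cyclic shift `(a, b) → (c, d) → (e, f) → (a, b)`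
  rw [← mul_rotate (swapGen a d) (swapGen c f) (swapGen e b),
    mul_rotate (swapGen e b) (swapGen a d) (swapGen c f),
    mul_rotate (swapGen e d) (swapGen c b) (swapGen a f),
    ← mul_rotate (swapGen c b) (swapGen a f) (swapGen e d)]
  module

lemma jacobiator_swapGen_eq_zero (hr : Function.Injective r) (a b c d e f : I) :
    jacobiator br (swapGen a b) (swapGen c d) (swapGen e f) = 0 := by
  rw [jacobiator_swapGen r hbr h_gen]
  rcases jacobiCancels (r a) (r b) (r c) (r d) (r e) (r f) with
    ⟨hC₁, hC₂⟩ | ⟨hM₁, hM₂⟩ | ⟨hC, hM⟩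
  · simp [hC₁, hC₂]
  · have hM₁ : swapGen a d * swapGen c f * swapGen e b = 0 := by
      obtain h | h | h := hM₁ <;> simp [hr h, swapGen_self]
    have hM₂ : swapGen c b * swapGen a f * swapGen e d = 0 := by
      obtain h | h | h := hM₂ <;> simp [hr h, swapGen_self]
    simp [hM₁, hM₂]
  · have hM :
        swapGen a d * swapGen c f * swapGen e b = swapGen c b * swapGen a f * swapGen e d := by
      obtain ⟨h, h'⟩ | ⟨h, h'⟩ | ⟨h, h'⟩ | ⟨h, h'⟩ | ⟨h, h'⟩ := hM <;>
        rw [hr h, hr h'] <;> ring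
    rw [hM, ← add_smul, ← add_div, ← Int.cast_add, hC, Int.cast_zero, zero_div, zero_smul]

end SwappingRing

/-- **(F. Labourie)** Any swapping bracket on the swapping ring of `(I, r)`,
with `r : I → ℝ` injective, satisfies the Jacobi identity. -/
theorem swapping_bracket_jacobi {I : Type*} (r : I → ℝ) (hr : Function.Injective r)
    (br : SwapRing I → SwapRing I → SwapRing I)
    -- `{·,·}` is ℝ-bilinear, antisymmetric, and a derivation in each argument
    (h_add : ∀ x y z : SwapRing I, br (x + y) z = br x z + br y z)
    (h_smul : ∀ (c : ℝ) (x y : SwapRing I), br (c • x) y = c • br x y)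
    (h_anti : ∀ x y : SwapRing I, br x y = - br y x)
    (h_leib : ∀ x y z : SwapRing I, br (x * y) z = x * br y z + y * br x z)
    -- values on the generators
    (h_gen : ∀ a b c d : I,
      br (swapGen a b) (swapGen c d) =
        linkJ (r a) (r b) (r c) (r d) • (swapGen a d * swapGen c b)) :
    ∀ P Q R : SwapRing I, br (br P Q) R + br (br Q R) P + br (br R P) Q = 0 := by
  have hbr : IsAlmostPoissonBracket ℝ br := ⟨h_add, h_smul, h_anti, h_leib⟩
  refine hbr.jacobiator_eq_zero adjoin_range_swapGen ?_
  rintro _ ⟨⟨a, b⟩, rfl⟩ _ ⟨⟨c, d⟩, rfl⟩ _ ⟨⟨e, f⟩, rfl⟩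
  exact jacobiator_swapGen_eq_zero r hbr h_gen hr a b c d e f
end
end

section
/- Let N ≥ 5. Then K(B_1, B_2, B_3) = 0. Moreover, if N ≥ 6 then K(B_1, B_2, B_4) = 0. -/
noncomputable section

/-!
Both brackets are derivations in their first argument, so every term of the mixed Jacobiator
of three generators is computed from the brackets between those generators by the Leibniz and
quotient rules. For `B_k, B_{k+1}, B_{k+2}` and for `B_k, B_{k+1}, B_{k+3}` only the brackets of
generators at distance at most two survive, and the six resulting rational functions cancel.
-/

/-- The field `F = ℝ(B_1, …, B_N)` of rational functions in `N` variables
indexed by `ZMod N` (indices read modulo `N`). -/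
abbrev RatF (N : ℕ) : Type := FractionRing (MvPolynomial (ZMod N) ℝ)

/-- The generator `B_i` of `ℝ(B_1, …, B_N)`. -/
noncomputable def Bgen (N : ℕ) (i : ZMod N) : RatF N :=
  algebraMap (MvPolynomial (ZMod N) ℝ) (RatF N) (MvPolynomial.X i)

theorem Bgen_ne_zero {N : ℕ} (i : ZMod N) : Bgen N i ≠ 0 :=
  fun h => MvPolynomial.X_ne_zero i (IsFractionRing.to_map_eq_zero_iff.mp h)

theorem ZMod.natCast_ne_zero_of_lt {N m : ℕ} (h0 : m ≠ 0) (h : m < N) : (m : ZMod N) ≠ 0 := by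
  rw [Ne, ZMod.natCast_eq_zero_iff]
  exact fun hdvd => (Nat.le_of_dvd (Nat.pos_of_ne_zero h0) hdvd).not_gt h

section Bracket

variable {K : Type*} [Field K] {b : K → K → K}

structure IsLeibnizLeft (b : K → K → K) : Prop where
  add_left : ∀ x y z, b (x + y) z = b x z + b y z
  leibniz_left : ∀ x y z, b (x * y) z = x * b y z + y * b x z

namespace IsLeibnizLeft

def derivation (hb : IsLeibnizLeft b) (z : K) : Derivation ℤ K K :=
  Derivation.mk' (AddMonoidHom.mk' (b · z) (hb.add_left · · z)).toIntLinearMap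
    (hb.leibniz_left · · z)

theorem zero_left (hb : IsLeibnizLeft b) (z : K) : b 0 z = 0 :=
  (hb.derivation z).map_zero

theorem sub_left (hb : IsLeibnizLeft b) (x y z : K) : b (x - y) z = b x z - b y z :=
  (hb.derivation z).map_sub x y

theorem neg_left (hb : IsLeibnizLeft b) (x z : K) : b (-x) z = -b x z :=
  (hb.derivation z).map_neg x

theorem div_left (hb : IsLeibnizLeft b) (x y z : K) :
    b (x / y) z = (y * b x z - x * b y z) / y ^ 2 := by
  rw [div_eq_inv_mul _ (y ^ 2), ← inv_pow]
  exact (hb.derivation z).leibniz_div x y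

end IsLeibnizLeft

variable {N : ℕ}

structure IsC2NBracket (B : ZMod N → K) (b : K → K → K) : Prop extends IsLeibnizLeft b where
  skew : ∀ x y, b x y = -b y x
  apply_add_one : ∀ k, b (B k) (B (k + 1)) = B k * B (k + 1) - B k - B (k + 1)
  apply_add_two : ∀ k, b (B k) (B (k + 2)) = -(B k * B (k + 2)) / B (k + 1)
  apply_eq_zero : ∀ i j, j - i ≠ 1 → j - i ≠ -1 → j - i ≠ 2 → j - i ≠ -2 → b (B i) (B j) = 0

structure IsS2Bracket (B : ZMod N → K) (b : K → K → K) : Prop extends IsLeibnizLeft b where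
  apply_add_one : ∀ k, b (B k) (B (k + 1)) = B k * B (k + 1)
  apply_add_one_rev : ∀ k, b (B (k + 1)) (B k) = -(B k * B (k + 1))
  apply_eq_zero : ∀ i j, i + 1 ≠ j → j + 1 ≠ i → b (B i) (B j) = 0

theorem IsS2Bracket.of_ite_smul [Module ℝ K] {B : ZMod N → K} (hN : 3 ≤ N)
    (hb : IsLeibnizLeft b)
    (hgen : ∀ i j, b (B i) (B j) =
      ((if i + 1 = j then (1 : ℝ) else 0) - (if i - 1 = j then (1 : ℝ) else 0)) • (B i * B j)) :
    IsS2Bracket B b := by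
  have h2 : (2 : ZMod N) ≠ 0 := by exact_mod_cast ZMod.natCast_ne_zero_of_lt two_ne_zero hN
  refine ⟨hb, fun k => ?_, fun k => ?_, fun i j h₁ h₂ => ?_⟩
  · rw [hgen, if_pos rfl, if_neg fun h => h2 (by linear_combination -h)]
    simp
  · rw [hgen, if_neg fun h => h2 (by linear_combination h), if_pos (add_sub_cancel_right k 1)]
    simp [mul_comm]
  · rw [hgen, if_neg h₁, if_neg fun h => h₂ (by rw [← h, sub_add_cancel])]
    simp

def mixedJacobiator (bC bS : K → K → K) (x y z : K) : K :=
  bS (bC x y) z + bS (bC y z) x + bS (bC z x) y + bC (bS x y) z + bC (bS y z) x + bC (bS z x) y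

variable {B : ZMod N → K} {bC bS : K → K → K}

theorem mixedJacobiator_add_one_add_two (hC : IsC2NBracket B bC) (hS : IsS2Bracket B bS)
    (hB : ∀ i, B i ≠ 0) (hN : 5 ≤ N) (k : ZMod N) :
    mixedJacobiator bC bS (B k) (B (k + 1)) (B (k + 2)) = 0 := by
  have hne {m : ℕ} (h0 : m ≠ 0) (hm : m < N) : (m : ZMod N) ≠ 0 :=
    ZMod.natCast_ne_zero_of_lt h0 hm
  have h1 : (1 : ZMod N) ≠ 0 := by exact_mod_cast hne one_ne_zero (by omega)
  have h3 : (3 : ZMod N) ≠ 0 := by exact_mod_cast hne three_ne_zero (by omega)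
  have hk : k + 1 + 1 = k + 2 := by ring
  have hB1 := hB (k + 1)
  have hC01 := hC.apply_add_one k
  have hC12 : bC (B (k + 1)) (B (k + 2)) = B (k + 1) * B (k + 2) - B (k + 1) - B (k + 2) := by
    simpa only [hk] using hC.apply_add_one (k + 1)
  have hC02 := hC.apply_add_two k
  have hC10 : bC (B (k + 1)) (B k) = -(B k * B (k + 1) - B k - B (k + 1)) := by
    rw [hC.skew, hC01]
  have hC20 : bC (B (k + 2)) (B k) = B k * B (k + 2) / B (k + 1) := by
    rw [hC.skew, hC02, neg_div, neg_neg]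
  have hS01 := hS.apply_add_one k
  have hS10 := hS.apply_add_one_rev k
  have hS12 : bS (B (k + 1)) (B (k + 2)) = B (k + 1) * B (k + 2) := by
    simpa only [hk] using hS.apply_add_one (k + 1)
  have hS21 : bS (B (k + 2)) (B (k + 1)) = -(B (k + 1) * B (k + 2)) := by
    simpa only [hk] using hS.apply_add_one_rev (k + 1)
  have hS02 : bS (B k) (B (k + 2)) = 0 := hS.apply_eq_zero _ _
    (fun h => h1 (by linear_combination -h)) (fun h => h3 (by linear_combination h))
  have hS20 : bS (B (k + 2)) (B k) = 0 := hS.apply_eq_zero _ _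
    (fun h => h3 (by linear_combination h)) (fun h => h1 (by linear_combination -h))
  have hS11 : bS (B (k + 1)) (B (k + 1)) = 0 := hS.apply_eq_zero _ _
    (fun h => h1 (by linear_combination h)) (fun h => h1 (by linear_combination h))
  simp only [mixedJacobiator, hS.sub_left, hS.leibniz_left, hS.div_left, hC.leibniz_left,
    hC.zero_left, hC01, hC12, hC02, hC10, hC20, hS01, hS10, hS12, hS21, hS02, hS20, hS11]
  field_simp
  ring

theorem mixedJacobiator_add_one_add_three (hC : IsC2NBracket B bC) (hS : IsS2Bracket B bS)
    (hB : ∀ i, B i ≠ 0) (hN : 6 ≤ N) (k : ZMod N) :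
    mixedJacobiator bC bS (B k) (B (k + 1)) (B (k + 3)) = 0 := by
  have hne {m : ℕ} (h0 : m ≠ 0) (hm : m < N) : (m : ZMod N) ≠ 0 :=
    ZMod.natCast_ne_zero_of_lt h0 hm
  have h1 : (1 : ZMod N) ≠ 0 := by exact_mod_cast hne one_ne_zero (by omega)
  have h2 : (2 : ZMod N) ≠ 0 := by exact_mod_cast hne two_ne_zero (by omega)
  have h3 : (3 : ZMod N) ≠ 0 := by exact_mod_cast hne three_ne_zero (by omega)
  have h4 : (4 : ZMod N) ≠ 0 := by exact_mod_cast hne four_ne_zero (by omega)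
  have h5 : (5 : ZMod N) ≠ 0 := by exact_mod_cast hne (m := 5) (by norm_num) (by omega)
  have hB2 := hB (k + 2)
  have hC01 := hC.apply_add_one k
  have hC13 : bC (B (k + 1)) (B (k + 3)) = -(B (k + 1) * B (k + 3)) / B (k + 2) := by
    have h := hC.apply_add_two (k + 1)
    rwa [show k + 1 + 2 = k + 3 by ring, show k + 1 + 1 = k + 2 by ring] at h
  have hC03 : bC (B k) (B (k + 3)) = 0 := hC.apply_eq_zero _ _
    (fun h => h2 (by linear_combination h)) (fun h => h4 (by linear_combination h))
    (fun h => h1 (by linear_combination h)) (fun h => h5 (by linear_combination h))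
  have hC30 : bC (B (k + 3)) (B k) = 0 := by rw [hC.skew, hC03, neg_zero]
  have hS01 := hS.apply_add_one k
  have hS10 := hS.apply_add_one_rev k
  have hS03 : bS (B k) (B (k + 3)) = 0 := hS.apply_eq_zero _ _
    (fun h => h2 (by linear_combination -h)) (fun h => h4 (by linear_combination h))
  have hS30 : bS (B (k + 3)) (B k) = 0 := hS.apply_eq_zero _ _
    (fun h => h4 (by linear_combination h)) (fun h => h2 (by linear_combination -h))
  have hS13 : bS (B (k + 1)) (B (k + 3)) = 0 := hS.apply_eq_zero _ _
    (fun h => h1 (by linear_combination -h)) (fun h => h3 (by linear_combination h))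
  have hS20 : bS (B (k + 2)) (B k) = 0 := hS.apply_eq_zero _ _
    (fun h => h3 (by linear_combination h)) (fun h => h1 (by linear_combination -h))
  simp only [mixedJacobiator, hS.sub_left, hS.leibniz_left, hS.div_left, hS.neg_left,
    hS.zero_left, hC.leibniz_left, hC.zero_left, hC01, hC13, hC03, hC30, hS01, hS10, hS03, hS30,
    hS13, hS20]
  field_simp
  ring

end Bracket

theorem mixed_jacobiator_vanishes_close_cases_general (N : ℕ) (hN : 5 ≤ N)
    (bC bS : RatF N → RatF N → RatF N)
    -- `{·,·}_{C2N}` is ℝ-bilinear, antisymmetric, and a derivation in each argument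
    (hC_add : ∀ x y z : RatF N, bC (x + y) z = bC x z + bC y z)
    (hC_anti : ∀ x y : RatF N, bC x y = - bC y x)
    (hC_leib : ∀ x y z : RatF N, bC (x * y) z = x * bC y z + y * bC x z)
    -- values of `{·,·}_{C2N}` on the generators
    (hC_gen1 : ∀ k : ZMod N,
      bC (Bgen N k) (Bgen N (k + 1)) =
        Bgen N k * Bgen N (k + 1) - Bgen N k - Bgen N (k + 1))
    (hC_gen2 : ∀ k : ZMod N,
      bC (Bgen N k) (Bgen N (k + 2)) =
        - (Bgen N k * Bgen N (k + 2)) / Bgen N (k + 1))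
    (hC_gen0 : ∀ i j : ZMod N,
      j - i ≠ 1 → j - i ≠ -1 → j - i ≠ 2 → j - i ≠ -2 → bC (Bgen N i) (Bgen N j) = 0)
    -- `{·,·}_{S2}` is ℝ-bilinear, antisymmetric, and a derivation in each argument
    (hS_add : ∀ x y z : RatF N, bS (x + y) z = bS x z + bS y z)
    (hS_leib : ∀ x y z : RatF N, bS (x * y) z = x * bS y z + y * bS x z)
    -- values of `{·,·}_{S2}` on the generators
    (hS_gen : ∀ i j : ZMod N,
      bS (Bgen N i) (Bgen N j) =
        ((if i + 1 = j then (1 : ℝ) else 0) - (if i - 1 = j then (1 : ℝ) else 0)) •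
          (Bgen N i * Bgen N j)) :
    (      bS (bC (Bgen N 1) (Bgen N 2)) (Bgen N 3) +
      bS (bC (Bgen N 2) (Bgen N 3)) (Bgen N 1) +
      bS (bC (Bgen N 3) (Bgen N 1)) (Bgen N 2) +
      bC (bS (Bgen N 1) (Bgen N 2)) (Bgen N 3) +
      bC (bS (Bgen N 2) (Bgen N 3)) (Bgen N 1) +
      bC (bS (Bgen N 3) (Bgen N 1)) (Bgen N 2) = 0) ∧
    (6 ≤ N →
    (      bS (bC (Bgen N 1) (Bgen N 2)) (Bgen N 4) +
      bS (bC (Bgen N 2) (Bgen N 4)) (Bgen N 1) +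
      bS (bC (Bgen N 4) (Bgen N 1)) (Bgen N 2) +
      bC (bS (Bgen N 1) (Bgen N 2)) (Bgen N 4) +
      bC (bS (Bgen N 2) (Bgen N 4)) (Bgen N 1) +
      bC (bS (Bgen N 4) (Bgen N 1)) (Bgen N 2) = 0)) := by
  have hC : IsC2NBracket (Bgen N) bC := ⟨⟨hC_add, hC_leib⟩, hC_anti, hC_gen1, hC_gen2, hC_gen0⟩
  have hS : IsS2Bracket (Bgen N) bS := .of_ite_smul (by omega) ⟨hS_add, hS_leib⟩ hS_gen
  have h12 : (1 + 1 : ZMod N) = 2 := one_add_one_eq_two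
  refine ⟨?_, fun hN6 => ?_⟩
  · have h := mixedJacobiator_add_one_add_two hC hS Bgen_ne_zero hN 1
    rwa [h12, show (1 + 2 : ZMod N) = 3 by norm_num] at h
  · have h := mixedJacobiator_add_one_add_three hC hS Bgen_ne_zero hN6 1
    rwa [h12, show (1 + 3 : ZMod N) = 4 by norm_num] at h

/-- `K(B_1, B_2, B_3) = 0` for `N ≥ 5`; moreover `K(B_1, B_2, B_4) = 0`
for `N ≥ 6`. -/
theorem mixed_jacobiator_vanishes_close_cases (N : ℕ) (hN : 5 ≤ N)
    (bC bS : RatF N → RatF N → RatF N)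
    -- `{·,·}_{C2N}` is ℝ-bilinear, antisymmetric, and a derivation in each argument
    (hC_add : ∀ x y z : RatF N, bC (x + y) z = bC x z + bC y z)
    (hC_smul : ∀ (c : ℝ) (x y : RatF N), bC (c • x) y = c • bC x y)
    (hC_anti : ∀ x y : RatF N, bC x y = - bC y x)
    (hC_leib : ∀ x y z : RatF N, bC (x * y) z = x * bC y z + y * bC x z)
    -- values of `{·,·}_{C2N}` on the generators
    (hC_gen1 : ∀ k : ZMod N,
      bC (Bgen N k) (Bgen N (k + 1)) =
        Bgen N k * Bgen N (k + 1) - Bgen N k - Bgen N (k + 1))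
    (hC_gen2 : ∀ k : ZMod N,
      bC (Bgen N k) (Bgen N (k + 2)) =
        - (Bgen N k * Bgen N (k + 2)) / Bgen N (k + 1))
    (hC_gen0 : ∀ i j : ZMod N,
      j - i ≠ 1 → j - i ≠ -1 → j - i ≠ 2 → j - i ≠ -2 → bC (Bgen N i) (Bgen N j) = 0)
    -- `{·,·}_{S2}` is ℝ-bilinear, antisymmetric, and a derivation in each argument
    (hS_add : ∀ x y z : RatF N, bS (x + y) z = bS x z + bS y z)
    (hS_smul : ∀ (c : ℝ) (x y : RatF N), bS (c • x) y = c • bS x y)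
    (hS_anti : ∀ x y : RatF N, bS x y = - bS y x)
    (hS_leib : ∀ x y z : RatF N, bS (x * y) z = x * bS y z + y * bS x z)
    -- values of `{·,·}_{S2}` on the generators
    (hS_gen : ∀ i j : ZMod N,
      bS (Bgen N i) (Bgen N j) =
        ((if i + 1 = j then (1 : ℝ) else 0) - (if i - 1 = j then (1 : ℝ) else 0)) •
          (Bgen N i * Bgen N j)) :
    (      bS (bC (Bgen N 1) (Bgen N 2)) (Bgen N 3) +
      bS (bC (Bgen N 2) (Bgen N 3)) (Bgen N 1) +
      bS (bC (Bgen N 3) (Bgen N 1)) (Bgen N 2) +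
      bC (bS (Bgen N 1) (Bgen N 2)) (Bgen N 3) +
      bC (bS (Bgen N 2) (Bgen N 3)) (Bgen N 1) +
      bC (bS (Bgen N 3) (Bgen N 1)) (Bgen N 2) = 0) ∧
    (6 ≤ N →
    (      bS (bC (Bgen N 1) (Bgen N 2)) (Bgen N 4) +
      bS (bC (Bgen N 2) (Bgen N 4)) (Bgen N 1) +
      bS (bC (Bgen N 4) (Bgen N 1)) (Bgen N 2) +
      bC (bS (Bgen N 1) (Bgen N 2)) (Bgen N 4) +
      bC (bS (Bgen N 2) (Bgen N 4)) (Bgen N 1) +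
      bC (bS (Bgen N 4) (Bgen N 1)) (Bgen N 2) = 0)) :=
  mixed_jacobiator_vanishes_close_cases_general N hN bC bS hC_add hC_anti hC_leib hC_gen1 hC_gen2
    hC_gen0 hS_add hS_leib hS_gen
end
end
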